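/- arXiv:2003.08569 — 5 statements merged into one kernel-verified Lean document; each statement's English description precedes it below -/
import Mathlib

section
/- Let d ≥ 1 be an integer and let 1 ≤ p < q < ∞ be real numbers. Then the James constant of the Morrey space M^p_q(ℝ^d) equals 2; that is, sup{ min{‖f + g‖_{M^p_q}, ‖f − g‖_{M^p_q}} : f, g measurable with ‖f‖_{M^p_q} = ‖g‖_{M^p_q} = 1 } = 2. -/
open MeasureTheory Metric
open scoped ENNReal

/-- The Morrey norm `‖f‖_{M^p_q}` of a function `f : ℝ^d → ℝ`, valued in `ℝ≥0∞`. -/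
noncomputable def morreyNorm (d : ℕ) (p q : ℝ) (f : EuclideanSpace ℝ (Fin d) → ℝ) : ℝ≥0∞ :=
  ⨆ (a : EuclideanSpace ℝ (Fin d)) (R : ℝ) (_ : 0 < R),
    volume (ball a R) ^ (1 / q - 1 / p) *
      (∫⁻ y in ball a R, ENNReal.ofReal (|f y| ^ p)) ^ (1 / p)

lemma rpow_anti {x y : ℝ≥0∞} {z : ℝ} (hz : z ≤ 0) (h : x ≤ y) : y ^ z ≤ x ^ z := by
  rw [show z = -(-z) by ring, ENNReal.rpow_neg y, ENNReal.rpow_neg x]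
  exact ENNReal.inv_le_inv.mpr (ENNReal.rpow_le_rpow h (by linarith))

lemma morreyNorm_congr_abs {d : ℕ} {p q : ℝ} {f g : EuclideanSpace ℝ (Fin d) → ℝ}
    (h : ∀ x, |f x| = |g x|) : morreyNorm d p q f = morreyNorm d p q g := by
  unfold morreyNorm; simp_rw [h]

lemma morreyNorm_const_mul (d : ℕ) {p : ℝ} (q : ℝ) (hp : 0 < p) (t : ℝ)
    (f : EuclideanSpace ℝ (Fin d) → ℝ) :
    morreyNorm d p q (fun x => t * f x) = ENNReal.ofReal |t| * morreyNorm d p q f := by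
  unfold morreyNorm
  rw [ENNReal.mul_iSup]; refine iSup_congr fun a => ?_
  rw [ENNReal.mul_iSup]; refine iSup_congr fun R => ?_
  rw [ENNReal.mul_iSup]; refine iSup_congr fun hR => ?_
  have h1 : ∀ y : EuclideanSpace ℝ (Fin d), ENNReal.ofReal (|t * f y| ^ p)
      = ENNReal.ofReal (|t| ^ p) * ENNReal.ofReal (|f y| ^ p) := by
    intro y
    rw [abs_mul, Real.mul_rpow (abs_nonneg _) (abs_nonneg _),
      ENNReal.ofReal_mul (by positivity)]
  simp_rw [h1]
  rw [lintegral_const_mul' _ _ ENNReal.ofReal_ne_top,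
    ENNReal.mul_rpow_of_nonneg _ _ (by positivity : (0:ℝ) ≤ 1 / p),
    ← ENNReal.ofReal_rpow_of_nonneg (abs_nonneg t) hp.le,
    ← ENNReal.rpow_mul, mul_one_div, div_self hp.ne', ENNReal.rpow_one]
  ring

lemma morreyNorm_indicator (d : ℕ) {p : ℝ} (q : ℝ) (hp : 0 < p)
    (S : Set (EuclideanSpace ℝ (Fin d))) (hS : MeasurableSet S) :
    morreyNorm d p q (S.indicator fun _ => 1) =
      ⨆ (a : EuclideanSpace ℝ (Fin d)) (R : ℝ) (_ : 0 < R),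
        volume (ball a R) ^ (1 / q - 1 / p) * (volume (S ∩ ball a R)) ^ (1 / p) := by
  unfold morreyNorm
  refine iSup_congr fun a => iSup_congr fun R => iSup_congr fun hR => ?_
  have h1 : ∀ y : EuclideanSpace ℝ (Fin d),
      ENNReal.ofReal (|S.indicator (fun _ => (1:ℝ)) y| ^ p) = S.indicator 1 y := by
    intro y
    by_cases hy : y ∈ S <;>
      simp [hy, Set.indicator_of_mem, Set.indicator_of_notMem, Real.zero_rpow hp.ne']
  simp_rw [h1]
  rw [lintegral_indicator_one hS, Measure.restrict_apply hS]

lemma rpow_split {p q : ℝ} (x : ℝ≥0∞) (hx0 : x ≠ 0) (hxt : x ≠ ⊤) :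
    x ^ (1/q - 1/p) * x ^ (1/p) = x ^ (1/q : ℝ) := by
  rw [← ENNReal.rpow_add _ _ hx0 hxt]; ring_nf

section
variable {d : ℕ} {p q : ℝ}
local notation "E" => EuclideanSpace ℝ (Fin d)

lemma vol_ball_one (hd : 1 ≤ d) (b : E) : volume (ball b 1) = volume (ball (0:E) 1) := by
  haveI : Nonempty (Fin d) := ⟨⟨0, hd⟩⟩
  rw [Measure.addHaar_ball volume b zero_le_one]; simp

lemma term_le' (hd : 1 ≤ d) (hp : 1 ≤ p) (hpq : p < q) {a : E} {R : ℝ} (hR : 0 < R) {m : ℝ≥0∞}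
    (hmV : m ≤ volume (ball a R)) (hmc : m ≤ volume (ball (0:E) 1)) :
    volume (ball a R) ^ (1/q - 1/p) * m ^ (1/p)
      ≤ volume (ball (0:E) 1) ^ (1/q : ℝ) := by
  have hp0 : (0:ℝ) < p := lt_of_lt_of_le one_pos hp
  have hq0 : (0:ℝ) < q := lt_trans hp0 hpq
  have hα : (1/q - 1/p : ℝ) ≤ 0 := by
    have := one_div_le_one_div_of_le hp0 hpq.le; linarith
  set V := volume (ball a R) with hV
  set c := volume (ball (0:E) 1) with hc
  have hV0 : V ≠ 0 := (measure_ball_pos volume a hR).ne'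
  have hVt : V ≠ ⊤ := measure_ball_lt_top.ne
  have hc0 : c ≠ 0 := (measure_ball_pos volume _ one_pos).ne'
  have hct : c ≠ ⊤ := measure_ball_lt_top.ne
  rcases le_total V c with hVc | hcV
  · calc V ^ (1/q - 1/p) * m ^ (1/p) ≤ V ^ (1/q - 1/p) * V ^ (1/p) :=
        mul_le_mul_right (ENNReal.rpow_le_rpow hmV (by positivity)) _
    _ = V ^ (1/q : ℝ) := rpow_split V hV0 hVt
    _ ≤ c ^ (1/q : ℝ) := ENNReal.rpow_le_rpow hVc (by positivity)
  · have hanti : V ^ (1/q - 1/p) ≤ c ^ (1/q - 1/p) := by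
      rw [show (1/q - 1/p : ℝ) = -(-(1/q - 1/p)) by ring, ENNReal.rpow_neg V,
        ENNReal.rpow_neg c]
      exact ENNReal.inv_le_inv.mpr (ENNReal.rpow_le_rpow hcV (by linarith))
    calc V ^ (1/q - 1/p) * m ^ (1/p) ≤ c ^ (1/q - 1/p) * c ^ (1/p) :=
        mul_le_mul' hanti (ENNReal.rpow_le_rpow hmc (by positivity))
    _ = c ^ (1/q : ℝ) := rpow_split c hc0 hct

lemma sup_ball (hd : 1 ≤ d) (hp : 1 ≤ p) (hpq : p < q) (b : E) :
    (⨆ (a : E) (R : ℝ) (_ : 0 < R),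
        volume (ball a R) ^ (1/q - 1/p) * (volume (ball b 1 ∩ ball a R)) ^ (1/p))
      = volume (ball (0:E) 1) ^ (1/q : ℝ) := by
  have hc0 : volume (ball (0:E) 1) ≠ 0 := (measure_ball_pos volume _ one_pos).ne'
  have hct : volume (ball (0:E) 1) ≠ ⊤ := measure_ball_lt_top.ne
  apply le_antisymm
  · refine iSup_le fun a => iSup_le fun R => iSup_le fun hR => ?_
    refine term_le' hd hp hpq hR (measure_mono Set.inter_subset_right) ?_
    calc volume (ball b 1 ∩ ball a R) ≤ volume (ball b 1) :=
        measure_mono Set.inter_subset_left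
    _ = volume (ball (0:E) 1) := vol_ball_one hd b
  · refine le_iSup_of_le b (le_iSup_of_le 1 (le_iSup_of_le one_pos ?_))
    rw [Set.inter_self, vol_ball_one hd b, rpow_split _ hc0 hct]

end

lemma ennreal_rpow_anti {x y : ℝ≥0∞} {z : ℝ} (hz : z ≤ 0) (h : x ≤ y) : y ^ z ≤ x ^ z := by
  rw [show z = -(-z) by ring, ENNReal.rpow_neg y, ENNReal.rpow_neg x]
  exact ENNReal.inv_le_inv.mpr (ENNReal.rpow_le_rpow h (by linarith))

section
variable {d : ℕ} {p q : ℝ}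
local notation "E" => EuclideanSpace ℝ (Fin d)

lemma key_exponent (hd : 1 ≤ d) (hp : 1 ≤ p) (hpq : p < q) :
    ∃ T : ℝ, 1 ≤ T ∧
      ENNReal.ofReal (T ^ d) ^ (1/q - 1/p) * (2:ℝ≥0∞) ^ (1/p) = 1 := by
  have hp0 : (0:ℝ) < p := lt_of_lt_of_le one_pos hp
  have hq0 : (0:ℝ) < q := lt_trans hp0 hpq
  have hu : (0:ℝ) < 1/p - 1/q := by
    have := one_div_lt_one_div_of_lt hp0 hpq; linarith
  have hd0 : (0:ℝ) < (d:ℝ) := by exact_mod_cast hd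
  set u : ℝ := 1/p - 1/q with hu_def
  set s : ℝ := 1 / (p * d * u) with hs
  have hs0 : 0 < s := by positivity
  refine ⟨2 ^ s, Real.one_le_rpow one_le_two hs0.le, ?_⟩
  have hT0 : (0:ℝ) < 2 ^ s := Real.rpow_pos_of_pos two_pos s
  rw [ENNReal.ofReal_rpow_of_pos (pow_pos hT0 d),
    show ((2:ℝ≥0∞)) = ENNReal.ofReal 2 by norm_num,
    ENNReal.ofReal_rpow_of_pos two_pos,
    ← ENNReal.ofReal_mul (by positivity)]
  have : (((2:ℝ) ^ s) ^ d) ^ (1/q - 1/p : ℝ) * (2:ℝ) ^ (1/p : ℝ) = 1 := by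
    rw [← Real.rpow_natCast ((2:ℝ) ^ s) d, ← Real.rpow_mul (by norm_num : (0:ℝ) ≤ 2),
      ← Real.rpow_mul (by norm_num : (0:ℝ) ≤ 2), ← Real.rpow_add two_pos]
    have harg : s * (d:ℝ) * (1/q - 1/p) + 1/p = 0 := by
      rw [show (1/q - 1/p : ℝ) = -u by rw [hu_def]; ring, hs]
      field_simp
      ring
    rw [harg, Real.rpow_zero]
  rw [this, ENNReal.ofReal_one]

lemma sup_union (hd : 1 ≤ d) (hp : 1 ≤ p) (hpq : p < q) :
    ∃ z : E, ball (0:E) 1 ∩ ball z 1 = ∅ ∧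
      (⨆ (a : E) (R : ℝ) (_ : 0 < R),
        volume (ball a R) ^ (1/q - 1/p) *
          (volume ((ball (0:E) 1 ∪ ball z 1) ∩ ball a R)) ^ (1/p))
      = volume (ball (0:E) 1) ^ (1/q : ℝ) := by
  have hp0 : (0:ℝ) < p := lt_of_lt_of_le one_pos hp
  have hq0 : (0:ℝ) < q := lt_trans hp0 hpq
  have hα : (1/q - 1/p : ℝ) ≤ 0 := by
    have := one_div_le_one_div_of_le hp0 hpq.le; linarith
  obtain ⟨T, hT1, hTkey⟩ := key_exponent (p := p) (q := q) hd hp hpq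
  have hT0 : (0:ℝ) < T := lt_of_lt_of_le one_pos hT1
  have i : Fin d := ⟨0, hd⟩
  set L : ℝ := 2 * T + 2 with hL
  set z : E := EuclideanSpace.single i L with hzdef
  have hznorm : ‖z‖ = L := by
    rw [hzdef, EuclideanSpace.norm_single, Real.norm_eq_abs, abs_of_pos (by linarith)]
  have hL4 : (4:ℝ) ≤ L := by linarith
  set c := volume (ball (0:E) 1) with hc
  have hc0 : c ≠ 0 := (measure_ball_pos volume _ one_pos).ne'
  have hct : c ≠ ⊤ := measure_ball_lt_top.ne
  have hdisj : ball (0:E) 1 ∩ ball z 1 = ∅ := by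
    rw [Set.eq_empty_iff_forall_notMem]
    rintro x ⟨hx0, hxz⟩
    rw [mem_ball] at hx0 hxz
    have : dist (0:E) z < 2 := by
      calc dist (0:E) z ≤ dist (0:E) x + dist x z := dist_triangle _ _ _
      _ < 1 + 1 := by rw [dist_comm (0:E) x]; exact add_lt_add hx0 hxz
      _ = 2 := by norm_num
    rw [dist_zero_left, hznorm] at this
    linarith
  refine ⟨z, hdisj, ?_⟩
  have hvolz : volume (ball z 1) = c := vol_ball_one hd z
  apply le_antisymm
  · refine iSup_le fun a => iSup_le fun R => iSup_le fun hR => ?_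
    by_cases h0 : volume (ball (0:E) 1 ∩ ball a R) = 0
    · have hm : volume ((ball (0:E) 1 ∪ ball z 1) ∩ ball a R)
          ≤ volume (ball z 1 ∩ ball a R) := by
        rw [Set.union_inter_distrib_right]
        refine le_trans (measure_union_le _ _) ?_
        rw [h0, zero_add]
      refine term_le' hd hp hpq hR
        (le_trans hm (measure_mono Set.inter_subset_right))
        (le_trans hm (le_trans (measure_mono Set.inter_subset_left) hvolz.le))
    by_cases hz0 : volume (ball z 1 ∩ ball a R) = 0
    · have hm : volume ((ball (0:E) 1 ∪ ball z 1) ∩ ball a R)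
          ≤ volume (ball (0:E) 1 ∩ ball a R) := by
        rw [Set.union_inter_distrib_right]
        refine le_trans (measure_union_le _ _) ?_
        rw [hz0, add_zero]
      exact term_le' hd hp hpq hR
        (le_trans hm (measure_mono Set.inter_subset_right))
        (le_trans hm (measure_mono Set.inter_subset_left))
    -- ball a R meets both unit balls, so R is large
    obtain ⟨x, hx0, hxa⟩ := nonempty_of_measure_ne_zero h0
    obtain ⟨y, hyz, hya⟩ := nonempty_of_measure_ne_zero hz0
    rw [mem_ball] at hx0 hxa hyz hya
    have hRT : T ≤ R := by
      have : L = dist (0:E) z := by rw [dist_zero_left, hznorm]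
      have hchain : dist (0:E) z ≤ dist (0:E) x + dist x a + dist a y + dist y z := by
        calc dist (0:E) z ≤ dist (0:E) x + dist x z := dist_triangle _ _ _
        _ ≤ dist (0:E) x + (dist x a + dist a z) := by
            exact add_le_add_right (dist_triangle _ _ _) _
        _ ≤ dist (0:E) x + (dist x a + (dist a y + dist y z)) := by
            exact add_le_add_right (add_le_add_right (dist_triangle _ _ _) _) _
        _ = dist (0:E) x + dist x a + dist a y + dist y z := by ring
      rw [← this] at hchain
      rw [dist_comm (0:E) x] at hchain
      rw [dist_comm a y] at hchain
      have : L < 1 + R + R + 1 := by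
        refine lt_of_le_of_lt hchain ?_
        gcongr <;> assumption
      linarith [hL.symm ▸ this]
    have hm2 : volume ((ball (0:E) 1 ∪ ball z 1) ∩ ball a R) ≤ 2 * c := by
      rw [Set.union_inter_distrib_right, two_mul]
      refine le_trans (measure_union_le _ _) (add_le_add ?_ ?_)
      · exact measure_mono Set.inter_subset_left
      · exact le_trans (measure_mono Set.inter_subset_left) hvolz.le
    have hVge : ENNReal.ofReal (T ^ d) * c ≤ volume (ball a R) := by
      haveI : Nonempty (Fin d) := ⟨i⟩
      rw [Measure.addHaar_ball volume a hR.le, finrank_euclideanSpace_fin, ← hc]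
      exact mul_le_mul_left (ENNReal.ofReal_le_ofReal (pow_le_pow_left₀ hT0.le hRT d)) c
    have hTne : ENNReal.ofReal (T ^ d) ≠ ⊤ := ENNReal.ofReal_ne_top
    calc volume (ball a R) ^ (1/q - 1/p) *
          (volume ((ball (0:E) 1 ∪ ball z 1) ∩ ball a R)) ^ (1/p)
        ≤ (ENNReal.ofReal (T ^ d) * c) ^ (1/q - 1/p) * (2 * c) ^ (1/p) :=
          mul_le_mul' (ennreal_rpow_anti hα hVge) (ENNReal.rpow_le_rpow hm2 (by positivity))
      _ = (ENNReal.ofReal (T ^ d) ^ (1/q - 1/p) * c ^ (1/q - 1/p)) *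
            ((2:ℝ≥0∞) ^ (1/p) * c ^ (1/p)) := by
          rw [ENNReal.mul_rpow_of_ne_top hTne hct,
            ENNReal.mul_rpow_of_nonneg _ _ (by positivity : (0:ℝ) ≤ 1/p)]
      _ = (ENNReal.ofReal (T ^ d) ^ (1/q - 1/p) * (2:ℝ≥0∞) ^ (1/p)) *
            (c ^ (1/q - 1/p) * c ^ (1/p)) := by ring
      _ = 1 * c ^ (1/q : ℝ) := by rw [hTkey, rpow_split c hc0 hct]
      _ = c ^ (1/q : ℝ) := one_mul _
  · refine le_iSup_of_le (0:E) (le_iSup_of_le 1 (le_iSup_of_le one_pos ?_))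
    rw [show (ball (0:E) 1 ∪ ball z 1) ∩ ball (0:E) 1 = ball (0:E) 1 from
      Set.inter_eq_right.mpr Set.subset_union_left, ← hc, rpow_split c hc0 hct]

end

lemma morreyNorm_add_le (d : ℕ) {p : ℝ} (q : ℝ) (hp : 1 ≤ p)
    {f g : EuclideanSpace ℝ (Fin d) → ℝ} (hf : Measurable f) (hg : Measurable g) :
    morreyNorm d p q (fun x => f x + g x) ≤ morreyNorm d p q f + morreyNorm d p q g := by
  have hp0 : (0:ℝ) < p := lt_of_lt_of_le one_pos hp
  unfold morreyNorm
  refine iSup_le fun a => iSup_le fun R => iSup_le fun hR => ?_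
  have key : (∫⁻ y in ball a R, ENNReal.ofReal (|f y + g y| ^ p)) ^ (1/p)
      ≤ (∫⁻ y in ball a R, ENNReal.ofReal (|f y| ^ p)) ^ (1/p)
        + (∫⁻ y in ball a R, ENNReal.ofReal (|g y| ^ p)) ^ (1/p) := by
    have h1 : ∀ y : EuclideanSpace ℝ (Fin d), ENNReal.ofReal (|f y + g y| ^ p)
        ≤ ((fun y => ENNReal.ofReal |f y|) + fun y => ENNReal.ofReal |g y|) y ^ p := by
      intro y
      have habs : |f y + g y| ^ p ≤ (|f y| + |g y|) ^ p :=
        Real.rpow_le_rpow (abs_nonneg _) (abs_add_le _ _) hp0.le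
      calc ENNReal.ofReal (|f y + g y| ^ p) ≤ ENNReal.ofReal ((|f y| + |g y|) ^ p) :=
          ENNReal.ofReal_le_ofReal habs
      _ = (ENNReal.ofReal (|f y| + |g y|)) ^ p := by
          rw [ENNReal.ofReal_rpow_of_nonneg (by positivity) hp0.le]
      _ = _ := by rw [ENNReal.ofReal_add (abs_nonneg _) (abs_nonneg _)]; rfl
    have h2 : ∀ h : EuclideanSpace ℝ (Fin d) → ℝ,
        (∫⁻ y in ball a R, ENNReal.ofReal |h y| ^ p)
          = ∫⁻ y in ball a R, ENNReal.ofReal (|h y| ^ p) := by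
      intro h
      refine lintegral_congr fun y => ?_
      rw [ENNReal.ofReal_rpow_of_nonneg (abs_nonneg _) hp0.le]
    calc (∫⁻ y in ball a R, ENNReal.ofReal (|f y + g y| ^ p)) ^ (1/p)
        ≤ (∫⁻ y in ball a R,
            ((fun y => ENNReal.ofReal |f y|) + fun y => ENNReal.ofReal |g y|) y ^ p) ^ (1/p) :=
          ENNReal.rpow_le_rpow (lintegral_mono h1) (by positivity)
      _ ≤ (∫⁻ y in ball a R, ENNReal.ofReal |f y| ^ p) ^ (1/p)
            + (∫⁻ y in ball a R, ENNReal.ofReal |g y| ^ p) ^ (1/p) :=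
          ENNReal.lintegral_Lp_add_le hf.abs.ennreal_ofReal.aemeasurable
            hg.abs.ennreal_ofReal.aemeasurable hp
      _ = _ := by rw [h2 f, h2 g]
  calc volume (ball a R) ^ (1/q - 1/p)
        * (∫⁻ y in ball a R, ENNReal.ofReal (|f y + g y| ^ p)) ^ (1/p)
      ≤ volume (ball a R) ^ (1/q - 1/p)
        * ((∫⁻ y in ball a R, ENNReal.ofReal (|f y| ^ p)) ^ (1/p)
          + (∫⁻ y in ball a R, ENNReal.ofReal (|g y| ^ p)) ^ (1/p)) :=
        mul_le_mul_right key _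
    _ = volume (ball a R) ^ (1/q - 1/p)
          * (∫⁻ y in ball a R, ENNReal.ofReal (|f y| ^ p)) ^ (1/p)
        + volume (ball a R) ^ (1/q - 1/p)
          * (∫⁻ y in ball a R, ENNReal.ofReal (|g y| ^ p)) ^ (1/p) := mul_add _ _ _
    _ ≤ _ := by
        refine add_le_add ?_ ?_ <;>
        · refine le_iSup_of_le a ?_
          refine le_iSup_of_le R ?_
          exact le_iSup_of_le hR le_rfl

/-- Theorem 1 (second part): for `1 ≤ p < q < ∞`, the James constant of the Morrey space
`M^p_q(ℝ^d)` equals `2`: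
`sup{ min{‖f+g‖_{M^p_q}, ‖f-g‖_{M^p_q}} : ‖f‖_{M^p_q} = ‖g‖_{M^p_q} = 1 } = 2`. -/
theorem morrey_jamesConst_eq_two (d : ℕ) (hd : 1 ≤ d) (p q : ℝ) (hp : 1 ≤ p) (hpq : p < q) :
    sSup { c : ℝ≥0∞ | ∃ f g : EuclideanSpace ℝ (Fin d) → ℝ,
        Measurable f ∧ Measurable g ∧
        morreyNorm d p q f = 1 ∧ morreyNorm d p q g = 1 ∧
        c = min (morreyNorm d p q (fun x => f x + g x))
              (morreyNorm d p q (fun x => f x - g x)) } = (2 : ℝ≥0∞) := by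
  have hp0 : (0:ℝ) < p := lt_of_lt_of_le one_pos hp
  have hq0 : (0:ℝ) < q := lt_trans hp0 hpq
  apply le_antisymm
  · -- upper bound via triangle inequality
    refine sSup_le ?_
    rintro b ⟨f, g, hf, hg, h1, h2, rfl⟩
    calc min (morreyNorm d p q (fun x => f x + g x))
          (morreyNorm d p q (fun x => f x - g x))
        ≤ morreyNorm d p q (fun x => f x + g x) := min_le_left _ _
      _ ≤ morreyNorm d p q f + morreyNorm d p q g := morreyNorm_add_le d q hp hf hg
      _ = 2 := by rw [h1, h2]; norm_num
  · -- lower bound: explicit construction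
    obtain ⟨z, hdisj, hsupu⟩ := sup_union hd hp hpq
    set c := volume (ball (0:EuclideanSpace ℝ (Fin d)) 1) with hc
    have hc0 : c ≠ 0 := (measure_ball_pos volume _ one_pos).ne'
    have hct : c ≠ ⊤ := measure_ball_lt_top.ne
    set N : ℝ≥0∞ := c ^ (1/q : ℝ) with hN
    have hN0 : N ≠ 0 := (ENNReal.rpow_pos (lt_of_le_of_ne zero_le (Ne.symm hc0)) hct).ne'
    have hNt : N ≠ ⊤ := ENNReal.rpow_ne_top_of_nonneg (by positivity) hct
    have hNtr : 0 < N.toReal := ENNReal.toReal_pos hN0 hNt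
    set s : ℝ := N.toReal⁻¹ with hs
    have hs0 : 0 < s := inv_pos.mpr hNtr
    have hofs : ENNReal.ofReal s = N⁻¹ := by
      rw [hs, ENNReal.ofReal_inv_of_pos hNtr, ENNReal.ofReal_toReal hNt]
    have hsN : ENNReal.ofReal s * N = 1 := by
      rw [hofs]; exact ENNReal.inv_mul_cancel hN0 hNt
    have hSmeas : MeasurableSet (ball (0:EuclideanSpace ℝ (Fin d)) 1 ∪ ball z 1) :=
      measurableSet_ball.union measurableSet_ball
    set f : EuclideanSpace ℝ (Fin d) → ℝ :=
      fun x => s * (ball (0:EuclideanSpace ℝ (Fin d)) 1 ∪ ball z 1).indicator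
        (fun _ => 1) x with hfdef
    set g : EuclideanSpace ℝ (Fin d) → ℝ :=
      fun x => s * ((ball (0:EuclideanSpace ℝ (Fin d)) 1).indicator (fun _ => (1:ℝ)) x
        - (ball z 1).indicator (fun _ => (1:ℝ)) x) with hgdef
    have hxnot : ∀ x : EuclideanSpace ℝ (Fin d),
        x ∈ ball (0:EuclideanSpace ℝ (Fin d)) 1 → x ∉ ball z 1 := by
      intro x hx0 hxz
      have : x ∈ ball (0:EuclideanSpace ℝ (Fin d)) 1 ∩ ball z 1 := ⟨hx0, hxz⟩
      rw [hdisj] at this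
      exact this
    have hfmeas : Measurable f :=
      (measurable_const.indicator hSmeas).const_mul s
    have hgmeas : Measurable g :=
      (((measurable_const.indicator measurableSet_ball)).sub
        (measurable_const.indicator measurableSet_ball)).const_mul s
    have hfnorm : morreyNorm d p q f = 1 := by
      rw [hfdef, morreyNorm_const_mul d q hp0, morreyNorm_indicator d q hp0 _ hSmeas,
        hsupu, abs_of_pos hs0]
      exact hsN
    have hgf : ∀ x, |g x| = |f x| := by
      intro x
      simp only [hgdef, hfdef]
      by_cases hx0 : x ∈ ball (0:EuclideanSpace ℝ (Fin d)) 1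
      · have hxz : x ∉ ball z 1 := hxnot x hx0
        rw [Set.indicator_of_mem (Set.mem_union_left _ hx0),
          Set.indicator_of_mem hx0, Set.indicator_of_notMem hxz]
        norm_num
      · by_cases hxz : x ∈ ball z 1
        · rw [Set.indicator_of_mem (Set.mem_union_right _ hxz),
            Set.indicator_of_notMem hx0, Set.indicator_of_mem hxz,
            show s * ((0:ℝ) - 1) = -(s * 1) by ring, abs_neg]
        · rw [Set.indicator_of_notMem (s := ball (0:EuclideanSpace ℝ (Fin d)) 1 ∪ ball z 1)
              (by simp [hx0, hxz]),
            Set.indicator_of_notMem hx0, Set.indicator_of_notMem hxz]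
          norm_num
    have hgnorm : morreyNorm d p q g = 1 := by
      rw [morreyNorm_congr_abs hgf]; exact hfnorm
    have hball_norm : ∀ b : EuclideanSpace ℝ (Fin d),
        morreyNorm d p q (fun x => (2*s) * (ball b 1).indicator (fun _ => (1:ℝ)) x)
          = 2 := by
      intro b
      rw [morreyNorm_const_mul d q hp0, morreyNorm_indicator d q hp0 _ measurableSet_ball,
        sup_ball hd hp hpq b, abs_of_pos (by linarith : (0:ℝ) < 2*s), ← hc, ← hN,
        ENNReal.ofReal_mul (by norm_num : (0:ℝ) ≤ 2), mul_assoc, hsN, mul_one]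
      norm_num
    have hadd : (fun x => f x + g x)
        = fun x => (2*s) * (ball (0:EuclideanSpace ℝ (Fin d)) 1).indicator
            (fun _ => (1:ℝ)) x := by
      funext x
      simp only [hfdef, hgdef]
      by_cases hx0 : x ∈ ball (0:EuclideanSpace ℝ (Fin d)) 1
      · have hxz : x ∉ ball z 1 := hxnot x hx0
        rw [Set.indicator_of_mem (Set.mem_union_left _ hx0),
          Set.indicator_of_mem hx0, Set.indicator_of_notMem hxz]
        ring
      · by_cases hxz : x ∈ ball z 1
        · rw [Set.indicator_of_mem (Set.mem_union_right _ hxz),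
            Set.indicator_of_notMem hx0, Set.indicator_of_mem hxz]
          ring
        · rw [Set.indicator_of_notMem (s := ball (0:EuclideanSpace ℝ (Fin d)) 1 ∪ ball z 1)
              (by simp [hx0, hxz]),
            Set.indicator_of_notMem hx0, Set.indicator_of_notMem hxz]
          ring
    have hsub : (fun x => f x - g x)
        = fun x => (2*s) * (ball z 1).indicator (fun _ => (1:ℝ)) x := by
      funext x
      simp only [hfdef, hgdef]
      by_cases hx0 : x ∈ ball (0:EuclideanSpace ℝ (Fin d)) 1
      · have hxz : x ∉ ball z 1 := hxnot x hx0
        rw [Set.indicator_of_mem (Set.mem_union_left _ hx0),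
          Set.indicator_of_mem hx0, Set.indicator_of_notMem hxz]
        ring
      · by_cases hxz : x ∈ ball z 1
        · rw [Set.indicator_of_mem (Set.mem_union_right _ hxz),
            Set.indicator_of_notMem hx0, Set.indicator_of_mem hxz]
          ring
        · rw [Set.indicator_of_notMem (s := ball (0:EuclideanSpace ℝ (Fin d)) 1 ∪ ball z 1)
              (by simp [hx0, hxz]),
            Set.indicator_of_notMem hx0, Set.indicator_of_notMem hxz]
          ring
    refine le_sSup ?_
    refine ⟨f, g, hfmeas, hgmeas, hfnorm, hgnorm, ?_⟩
    rw [hadd, hsub, hball_norm, hball_norm, min_self]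
end

section
/- Let X be a real normed space and let n ≥ 2 be an integer. If X is uniformly n-convex, then X is uniformly non-ℓ¹_n. That is, suppose that for every ε ∈ (0, n) there exists δ ∈ (0,1) such that for all x₁, …, x_n ∈ X with ‖x_i‖ = 1 for all i, if ‖x₁ ± x₂ ± ⋯ ± x_n‖ > ε for every choice of signs other than the all-plus choice, then ‖x₁ + x₂ + ⋯ + x_n‖ ≤ n(1 − δ). Then there exists δ > 0 such that for all x₁, …, x_n ∈ X with ‖x_i‖ = 1 for all i, min{‖x₁ ± x₂ ± ⋯ ± x_n‖ : all choices of signs} ≤ n(1 − δ). -/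
/-- Theorem 10: if a real normed space `X` is uniformly `n`-convex, then `X` is
uniformly non-`ℓ¹_n`. Sign patterns are encoded as functions `s : Fin n → ℝ` taking
values in `{1, -1}` with `s 0 = 1`; the all-plus pattern is excluded by requiring
`∃ i, s i = -1`. -/
theorem uniformly_nConvex_implies_uniformly_non_ell1n
    (X : Type*) [NormedAddCommGroup X] [NormedSpace ℝ X] (n : ℕ) (hn : 2 ≤ n)
    (hconv : ∀ ε : ℝ, 0 < ε → ε < n →
      ∃ δ : ℝ, 0 < δ ∧ δ < 1 ∧
        ∀ x : Fin n → X, (∀ i, ‖x i‖ = 1) →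
          (∀ s : Fin n → ℝ, (∀ i, s i = 1 ∨ s i = -1) →
            (∀ i : Fin n, (i : ℕ) = 0 → s i = 1) → (∃ i, s i = -1) →
            ε < ‖∑ i, s i • x i‖) →
          ‖∑ i, x i‖ ≤ n * (1 - δ)) :
    ∃ δ : ℝ, 0 < δ ∧
      ∀ x : Fin n → X, (∀ i, ‖x i‖ = 1) →
        ∃ s : Fin n → ℝ, (∀ i, s i = 1 ∨ s i = -1) ∧
          (∀ i : Fin n, (i : ℕ) = 0 → s i = 1) ∧
          ‖∑ i, s i • x i‖ ≤ n * (1 - δ) := by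
  have hn0 : (0 : ℝ) < n := by positivity
  obtain ⟨δ, hδ0, hδ1, hδ⟩ := hconv ((n : ℝ) / 2) (by positivity) (by linarith)
  refine ⟨min δ (1 / 2), by positivity, ?_⟩
  have hmin : (n : ℝ) * (1 - min δ (1 / 2)) ≥ (n : ℝ) / 2 := by
    have : min δ (1 / 2) ≤ 1 / 2 := min_le_right _ _
    nlinarith
  intro x hx
  by_cases h : ∀ s : Fin n → ℝ, (∀ i, s i = 1 ∨ s i = -1) →
      (∀ i : Fin n, (i : ℕ) = 0 → s i = 1) → (∃ i, s i = -1) →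
      (n : ℝ) / 2 < ‖∑ i, s i • x i‖
  · refine ⟨fun _ => 1, fun i => Or.inl rfl, fun i _ => rfl, ?_⟩
    have h1 := hδ x hx h
    have h2 : (n : ℝ) * (1 - δ) ≤ n * (1 - min δ (1 / 2)) := by
      have : min δ (1 / 2) ≤ δ := min_le_left _ _
      nlinarith
    calc ‖∑ i, (1 : ℝ) • x i‖ = ‖∑ i, x i‖ := by simp
      _ ≤ (n : ℝ) * (1 - δ) := h1
      _ ≤ _ := h2
  · push_neg at h
    obtain ⟨s, hs1, hs2, hs3, hs4⟩ := h
    exact ⟨s, hs1, hs2, hs4.trans hmin⟩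
end

section
/- Let d ≥ 1 be an integer, let 1 ≤ p < q < ∞ be real numbers, and let n ≥ 2 be an integer. Then the Morrey space M^p_q(ℝ^d) is not uniformly n-convex: there exists ε ∈ (0, n) such that for every δ ∈ (0,1) there exist measurable functions f₁, …, f_n : ℝ^d → ℝ with ‖f_i‖_{M^p_q} = 1 for all i, satisfying ‖f₁ ± f₂ ± ⋯ ± f_n‖_{M^p_q} > ε for every choice of signs other than the all-plus choice, and yet ‖f₁ + f₂ + ⋯ + f_n‖_{M^p_q} > n(1 − δ). -/
open MeasureTheory Metric
open scoped ENNReal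

private lemma morreyNorm_ge (d : ℕ) (p q : ℝ) (f : EuclideanSpace ℝ (Fin d) → ℝ)
    (a : EuclideanSpace ℝ (Fin d)) (R : ℝ) (hR : 0 < R) :
    volume (ball a R) ^ (1 / q - 1 / p) *
      (∫⁻ y in ball a R, ENNReal.ofReal (|f y| ^ p)) ^ (1 / p) ≤ morreyNorm d p q f :=
  le_iSup_of_le a (le_iSup_of_le R (le_iSup_of_le hR le_rfl))

private lemma morreyNorm_le (d : ℕ) (p q : ℝ) (f : EuclideanSpace ℝ (Fin d) → ℝ) (C : ℝ≥0∞)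
    (h : ∀ a R, 0 < R → volume (ball a R) ^ (1 / q - 1 / p) *
      (∫⁻ y in ball a R, ENNReal.ofReal (|f y| ^ p)) ^ (1 / p) ≤ C) :
    morreyNorm d p q f ≤ C :=
  iSup_le fun a => iSup_le fun R => iSup_le fun hR => h a R hR

/-- The Morrey space `M^p_q(ℝ^d)`, `1 ≤ p < q < ∞`, is not uniformly `n`-convex for
`n ≥ 2`: there is `ε ∈ (0, n)` such that for every `δ ∈ (0,1)` there exist measurable
`f₁, …, f_n` of Morrey norm `1` with `‖f₁ ± ⋯ ± f_n‖_{M^p_q} > ε` for every choice of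
signs other than the all-plus choice, and yet `‖f₁ + ⋯ + f_n‖_{M^p_q} > n(1-δ)`. -/
theorem morrey_not_uniformly_nConvex (d : ℕ) (hd : 1 ≤ d) (p q : ℝ) (hp : 1 ≤ p)
    (hpq : p < q) (n : ℕ) (hn : 2 ≤ n) :
    ∃ ε : ℝ, 0 < ε ∧ ε < n ∧
      ∀ δ : ℝ, 0 < δ → δ < 1 →
        ∃ f : Fin n → (EuclideanSpace ℝ (Fin d) → ℝ),
          (∀ i, Measurable (f i)) ∧ (∀ i, morreyNorm d p q (f i) = 1) ∧
          (∀ s : Fin n → ℝ, (∀ i, s i = 1 ∨ s i = -1) →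
            (∀ i : Fin n, (i : ℕ) = 0 → s i = 1) → (∃ i, s i = -1) →
            ENNReal.ofReal ε < morreyNorm d p q (fun x => ∑ i, s i * f i x)) ∧
          ENNReal.ofReal (n * (1 - δ)) <
            morreyNorm d p q (fun x => ∑ i, f i x) := by
  classical
  have hp0 : (0:ℝ) < p := lt_of_lt_of_le one_pos hp
  have hq0 : (0:ℝ) < q := lt_trans hp0 hpq
  have hip : (0:ℝ) < 1/p := by positivity
  have hiq : (0:ℝ) < 1/q := by positivity
  have hipq : 1/q < 1/p := one_div_lt_one_div_of_lt hp0 hpq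
  have hn2 : (2:ℝ) ≤ (n:ℝ) := by exact_mod_cast hn
  refine ⟨1/2, by norm_num, by linarith, ?_⟩
  intro δ hδ0 hδ1
  haveI : Nontrivial (EuclideanSpace ℝ (Fin d)) := by
    refine nontrivial_of_ne (EuclideanSpace.single ⟨0, hd⟩ (1:ℝ)) 0 fun h => ?_
    have h2 := congrArg norm h
    rw [EuclideanSpace.norm_single, norm_zero, norm_one] at h2
    exact one_ne_zero h2
  set v1 := volume (ball (0 : EuclideanSpace ℝ (Fin d)) 1) with hv1
  have hv1pos : 0 < v1 := measure_ball_pos _ _ one_pos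
  have hv1top : v1 ≠ ⊤ := measure_ball_lt_top.ne
  have hv1tr : 0 < v1.toReal := ENNReal.toReal_pos hv1pos.ne' hv1top
  have hvol : ∀ (a : EuclideanSpace ℝ (Fin d)) (R : ℝ), 0 ≤ R →
      volume (ball a R) = ENNReal.ofReal (R ^ d) * v1 := by
    intro a R hR
    rw [Measure.addHaar_ball volume a hR, finrank_euclideanSpace_fin]
  obtain ⟨r, hr0, hballr⟩ : ∃ r : ℝ, 0 < r ∧
      ∀ a : EuclideanSpace ℝ (Fin d), volume (ball a r) = 1 := by
    refine ⟨(v1.toReal)⁻¹ ^ ((d:ℝ))⁻¹, Real.rpow_pos_of_pos (inv_pos.mpr hv1tr) _, fun a => ?_⟩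
    rw [hvol a _ (Real.rpow_pos_of_pos (inv_pos.mpr hv1tr) _).le,
      Real.rpow_inv_natCast_pow (inv_pos.mpr hv1tr).le (by omega),
      ENNReal.ofReal_inv_of_pos hv1tr, ENNReal.ofReal_toReal hv1top,
      ENNReal.inv_mul_cancel hv1pos.ne' hv1top]
  obtain ⟨R₀, hR₀0, hkey⟩ : ∃ R₀ : ℝ, 0 < R₀ ∧
      ∀ (a : EuclideanSpace ℝ (Fin d)) (R : ℝ), R₀ ≤ R →
        volume (ball a R) ^ (1/q - 1/p) * (2:ℝ≥0∞) ^ ((1:ℝ)/p) ≤ 1 := by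
    set t : ℝ := (1/p) / (1/p - 1/q) with ht
    have hsub : (0:ℝ) < 1/p - 1/q := by linarith
    refine ⟨max 1 ((2:ℝ)^t / v1.toReal), lt_of_lt_of_le one_pos (le_max_left _ _), ?_⟩
    intro a R hR
    have h1R₀ : (1:ℝ) ≤ max 1 ((2:ℝ)^t / v1.toReal) := le_max_left _ _
    have hR1 : (1:ℝ) ≤ R := le_trans h1R₀ hR
    have hMV : ENNReal.ofReal ((2:ℝ)^t) ≤ volume (ball a R) := by
      rw [hvol a R (by linarith)]
      calc ENNReal.ofReal ((2:ℝ)^t) = ENNReal.ofReal ((2:ℝ)^t / v1.toReal) * v1 := by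
            rw [ENNReal.ofReal_div_of_pos hv1tr, ENNReal.ofReal_toReal hv1top,
              ENNReal.div_mul_cancel hv1pos.ne' hv1top]
        _ ≤ ENNReal.ofReal (R ^ d) * v1 := by
            refine mul_le_mul_left (ENNReal.ofReal_le_ofReal ?_) v1
            calc (2:ℝ)^t / v1.toReal ≤ max 1 ((2:ℝ)^t / v1.toReal) := le_max_right _ _
              _ ≤ R := hR
              _ ≤ R ^ d := le_self_pow₀ hR1 (by omega)
    have h2t : ENNReal.ofReal ((2:ℝ)^t) = (2:ℝ≥0∞) ^ t := by
      rw [← ENNReal.ofReal_ofNat, ENNReal.ofReal_rpow_of_pos two_pos]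
    have hpow : (2:ℝ≥0∞) ^ ((1:ℝ)/p) ≤ volume (ball a R) ^ (1/p - 1/q) := by
      have heq : (2:ℝ≥0∞) ^ ((1:ℝ)/p) = ((2:ℝ≥0∞) ^ t) ^ (1/p - 1/q) := by
        rw [← ENNReal.rpow_mul, ht, div_mul_cancel₀ _ hsub.ne']
      rw [heq]
      exact ENNReal.rpow_le_rpow (h2t ▸ hMV) hsub.le
    have h2ne : (2:ℝ≥0∞) ^ ((1:ℝ)/p) ≠ 0 := by
      simp [ENNReal.rpow_eq_zero_iff]
    have h2top : (2:ℝ≥0∞) ^ ((1:ℝ)/p) ≠ ⊤ := by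
      simp [ENNReal.rpow_eq_top_iff]
    calc volume (ball a R) ^ (1/q - 1/p) * (2:ℝ≥0∞) ^ ((1:ℝ)/p)
        = (volume (ball a R) ^ (1/p - 1/q))⁻¹ * (2:ℝ≥0∞) ^ ((1:ℝ)/p) := by
          rw [show (1/q - 1/p : ℝ) = -(1/p - 1/q) by ring, ENNReal.rpow_neg]
      _ ≤ ((2:ℝ≥0∞) ^ ((1:ℝ)/p))⁻¹ * (2:ℝ≥0∞) ^ ((1:ℝ)/p) :=
          mul_le_mul_left (ENNReal.inv_le_inv.mpr hpow) _
      _ = 1 := ENNReal.inv_mul_cancel h2ne h2top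
  set L : ℝ := 2*r + 2*R₀ with hLdef
  have hL2r : 2*r < L := by simp only [hLdef]; linarith
  have hLpos : 0 < L := by simp only [hLdef]; linarith
  set e1 : EuclideanSpace ℝ (Fin d) := EuclideanSpace.single ⟨0, hd⟩ (1:ℝ) with he1
  have hne1 : ‖e1‖ = 1 := by rw [he1, EuclideanSpace.norm_single, norm_one]
  set ctr : Fin n → EuclideanSpace ℝ (Fin d) := fun j => ((((j:ℕ):ℝ) + 1) * L) • e1 with hctr
  have hdist0 : ∀ j : Fin n, L ≤ dist (0 : EuclideanSpace ℝ (Fin d)) (ctr j) := by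
    intro j
    have h0j : (0:ℝ) ≤ ((j:ℕ):ℝ) := Nat.cast_nonneg _
    rw [dist_comm, dist_zero_right]
    simp only [hctr]
    rw [norm_smul, Real.norm_eq_abs, hne1, mul_one,
      abs_of_pos (mul_pos (by positivity) hLpos)]
    nlinarith [h0j, hLpos]
  have hdistjk : ∀ j k : Fin n, j ≠ k → L ≤ dist (ctr j) (ctr k) := by
    intro j k hjk
    have hcast : (1:ℝ) ≤ |((j:ℕ):ℝ) - ((k:ℕ):ℝ)| := by
      have hne' : ((j:ℕ):ℤ) ≠ ((k:ℕ):ℤ) := by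
        intro h
        exact hjk (Fin.ext (by exact_mod_cast h))
      have h1 : (1:ℤ) ≤ |((j:ℕ):ℤ) - ((k:ℕ):ℤ)| := Int.one_le_abs (sub_ne_zero.mpr hne')
      have h2 : ((1:ℤ):ℝ) ≤ |((((j:ℕ):ℤ) - ((k:ℕ):ℤ) : ℤ) : ℝ)| := by
        rw [← Int.cast_abs]; exact_mod_cast h1
      push_cast at h2
      exact h2
    rw [dist_eq_norm]
    have hdiff : ctr j - ctr k = ((((j:ℕ):ℝ) - ((k:ℕ):ℝ)) * L) • e1 := by
      simp only [hctr]; rw [← sub_smul]; congr 1; ring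
    rw [hdiff, norm_smul, Real.norm_eq_abs, hne1, mul_one, abs_mul, abs_of_pos hLpos]
    nlinarith [hcast, hLpos]
  have hsep : ∀ c c' : EuclideanSpace ℝ (Fin d), L ≤ dist c c' →
      ∀ y, y ∈ ball c r → y ∉ ball c' r := by
    intro c c' hcc' y hy hy'
    rw [mem_ball] at hy hy'
    have h1 := dist_triangle c y c'
    rw [dist_comm c y] at h1
    linarith
  set b : EuclideanSpace ℝ (Fin d) → EuclideanSpace ℝ (Fin d) → ℝ :=
    fun c x => (ball c r).indicator (fun _ => (1:ℝ)) x with hb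
  have hb_mem : ∀ c x, x ∈ ball c r → b c x = 1 := by
    intro c x hx; simp [hb, Set.indicator_of_mem hx]
  have hb_nmem : ∀ c x, x ∉ ball c r → b c x = 0 := by
    intro c x hx; simp [hb, Set.indicator_of_notMem hx]
  set f : Fin n → EuclideanSpace ℝ (Fin d) → ℝ := fun i x => b 0 x + b (ctr i) x with hf
  have hUmeas : ∀ i : Fin n,
      MeasurableSet (ball (0 : EuclideanSpace ℝ (Fin d)) r ∪ ball (ctr i) r) :=
    fun i => measurableSet_ball.union measurableSet_ball
  have hint : ∀ (i : Fin n) (a : EuclideanSpace ℝ (Fin d)) (R : ℝ),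
      (∫⁻ y in ball a R, ENNReal.ofReal (|f i y| ^ p))
        = volume ((ball (0 : EuclideanSpace ℝ (Fin d)) r ∪ ball (ctr i) r) ∩ ball a R) := by
    intro i a R
    have hpt : ∀ y, ENNReal.ofReal (|f i y| ^ p)
        = (ball (0 : EuclideanSpace ℝ (Fin d)) r ∪ ball (ctr i) r).indicator
            (fun _ => (1:ℝ≥0∞)) y := by
      intro y
      by_cases h0 : y ∈ ball (0 : EuclideanSpace ℝ (Fin d)) r
      · have h1 : y ∉ ball (ctr i) r := hsep _ _ (hdist0 i) y h0
        rw [Set.indicator_of_mem (Set.mem_union_left _ h0), hf]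
        simp only [hb_mem _ _ h0, hb_nmem _ _ h1]
        norm_num [Real.one_rpow]
      · by_cases h1 : y ∈ ball (ctr i) r
        · rw [Set.indicator_of_mem (Set.mem_union_right _ h1), hf]
          simp only [hb_mem _ _ h1, hb_nmem _ _ h0]
          norm_num [Real.one_rpow]
        · rw [Set.indicator_of_notMem (by rintro (h|h); exacts [h0 h, h1 h]), hf]
          simp only [hb_nmem _ _ h0, hb_nmem _ _ h1]
          norm_num [Real.zero_rpow hp0.ne']
    simp_rw [hpt]
    rw [lintegral_indicator (hUmeas i)]
    simp [Measure.restrict_restrict (hUmeas i), Measure.restrict_apply (hUmeas i)]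
  refine ⟨f, ?_, ?_, ?_, ?_⟩
  · intro i
    rw [hf]
    exact (measurable_const.indicator measurableSet_ball).add
      (measurable_const.indicator measurableSet_ball)
  · intro i
    have hlow : (1:ℝ≥0∞) ≤ morreyNorm d p q (f i) := by
      have h := morreyNorm_ge d p q (f i) 0 r hr0
      rw [hint i 0 r, Set.union_inter_cancel_left, hballr] at h
      simpa using h
    have hup : morreyNorm d p q (f i) ≤ 1 := by
      refine morreyNorm_le d p q _ 1 ?_
      intro a R hR
      rw [hint i a R]
      have hV0 : volume (ball a R) ≠ 0 := (measure_ball_pos _ _ hR).ne'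
      have hVtop : volume (ball a R) ≠ ⊤ := measure_ball_lt_top.ne
      by_cases hV1 : volume (ball a R) ≤ 1
      · have hmV : volume ((ball (0 : EuclideanSpace ℝ (Fin d)) r ∪ ball (ctr i) r) ∩ ball a R)
            ≤ volume (ball a R) := measure_mono Set.inter_subset_right
        calc volume (ball a R) ^ (1/q - 1/p) *
              volume ((ball (0 : EuclideanSpace ℝ (Fin d)) r ∪ ball (ctr i) r) ∩ ball a R)
                ^ ((1:ℝ)/p)
            ≤ volume (ball a R) ^ (1/q - 1/p) * volume (ball a R) ^ ((1:ℝ)/p) :=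
              mul_le_mul_right (ENNReal.rpow_le_rpow hmV (by positivity)) _
          _ = volume (ball a R) ^ ((1/q - 1/p) + 1/p) :=
              (ENNReal.rpow_add _ _ hV0 hVtop).symm
          _ = volume (ball a R) ^ ((1:ℝ)/q) := by ring_nf
          _ ≤ 1 := ENNReal.rpow_le_one hV1 hiq.le
      · by_cases hmeet : (ball (0 : EuclideanSpace ℝ (Fin d)) r ∩ ball a R).Nonempty ∧
            (ball (ctr i) r ∩ ball a R).Nonempty
        · obtain ⟨⟨u, hu⟩, ⟨w, hw⟩⟩ := hmeet
          have hu1 : dist u 0 < r := mem_ball.mp hu.1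
          have hu2 : dist u a < R := mem_ball.mp hu.2
          have hw1 : dist w (ctr i) < r := mem_ball.mp hw.1
          have hw2 : dist w a < R := mem_ball.mp hw.2
          have hRR₀ : R₀ ≤ R := by
            have h4 := dist_triangle4 (0 : EuclideanSpace ℝ (Fin d)) u a (ctr i)
            have h5 := dist_triangle a w (ctr i)
            have hc1 : dist (0 : EuclideanSpace ℝ (Fin d)) u = dist u 0 := dist_comm _ _
            have hc2 : dist a w = dist w a := dist_comm _ _
            have hd0 := hdist0 i
            simp only [hLdef] at hd0
            linarith
          have hm2 : volume ((ball (0 : EuclideanSpace ℝ (Fin d)) r ∪ ball (ctr i) r) ∩ ball a R)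
              ≤ 2 := by
            calc volume ((ball (0 : EuclideanSpace ℝ (Fin d)) r ∪ ball (ctr i) r) ∩ ball a R)
                ≤ volume (ball (0 : EuclideanSpace ℝ (Fin d)) r ∪ ball (ctr i) r) :=
                  measure_mono Set.inter_subset_left
              _ ≤ volume (ball (0 : EuclideanSpace ℝ (Fin d)) r) + volume (ball (ctr i) r) :=
                  measure_union_le _ _
              _ = 2 := by rw [hballr, hballr, one_add_one_eq_two]
          exact le_trans
            (mul_le_mul_right (ENNReal.rpow_le_rpow hm2 (by positivity)) _)
            (hkey a R hRR₀)
        · rw [not_and_or] at hmeet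
          have hm1 : volume ((ball (0 : EuclideanSpace ℝ (Fin d)) r ∪ ball (ctr i) r) ∩ ball a R)
              ≤ 1 := by
            rw [Set.union_inter_distrib_right]
            rcases hmeet with h | h <;>
              rw [Set.not_nonempty_iff_eq_empty.mp h]
            · rw [Set.empty_union]
              exact le_trans (measure_mono Set.inter_subset_left) (hballr _).le
            · rw [Set.union_empty]
              exact le_trans (measure_mono Set.inter_subset_left) (hballr _).le
          have h1 : volume ((ball (0 : EuclideanSpace ℝ (Fin d)) r ∪ ball (ctr i) r) ∩ ball a R)
              ^ ((1:ℝ)/p) ≤ 1 := ENNReal.rpow_le_one hm1 (by positivity)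
          have h2 : volume (ball a R) ^ (1/q - 1/p) ≤ 1 := by
            have h3 := ENNReal.rpow_le_rpow_of_exponent_le (le_of_not_ge hV1)
              (show 1/q - 1/p ≤ (0:ℝ) by linarith)
            rwa [ENNReal.rpow_zero] at h3
          calc volume (ball a R) ^ (1/q - 1/p) *
              volume ((ball (0 : EuclideanSpace ℝ (Fin d)) r ∪ ball (ctr i) r) ∩ ball a R)
                ^ ((1:ℝ)/p) ≤ 1 * 1 := mul_le_mul' h2 h1
            _ = 1 := one_mul 1
    exact le_antisymm hup hlow
  · rintro s hs hs0 ⟨i₀, hi₀⟩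
    have hlow := morreyNorm_ge d p q (fun x => ∑ i, s i * f i x) (ctr i₀) r hr0
    have hintc : (∫⁻ y in ball (ctr i₀) r, ENNReal.ofReal (|∑ i, s i * f i y| ^ p)) = 1 := by
      have hcongr : ∀ y ∈ ball (ctr i₀) r,
          ENNReal.ofReal (|∑ i, s i * f i y| ^ p) = 1 := by
        intro y hy
        have hy0 : y ∉ ball (0 : EuclideanSpace ℝ (Fin d)) r := by
          intro h
          exact hsep _ _ (hdist0 i₀) y h hy
        have hsum : (∑ i, s i * f i y) = s i₀ := by
          rw [Finset.sum_eq_single i₀]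
          · rw [hf]
            simp only [hb_nmem _ _ hy0, hb_mem _ _ hy]
            ring
          · intro i _ hii
            have h1 : y ∉ ball (ctr i) r :=
              hsep (ctr i₀) (ctr i) (hdistjk i₀ i (Ne.symm hii)) y hy
            rw [hf]
            simp only [hb_nmem _ _ hy0, hb_nmem _ _ h1]
            ring
          · intro h; exact absurd (Finset.mem_univ i₀) h
        rw [hsum]
        rcases hs i₀ with h | h <;> rw [h] <;> norm_num [Real.one_rpow]
      rw [setLIntegral_congr_fun measurableSet_ball hcongr,
        setLIntegral_one, hballr]
    rw [hballr, hintc] at hlow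
    simp only [ENNReal.one_rpow, one_mul] at hlow
    exact lt_of_lt_of_le (ENNReal.ofReal_lt_one.mpr (by norm_num)) hlow
  · have hlow := morreyNorm_ge d p q (fun x => ∑ i, f i x) 0 r hr0
    have hnR : (0:ℝ) < n := by linarith
    have hints : (∫⁻ y in ball (0 : EuclideanSpace ℝ (Fin d)) r,
        ENNReal.ofReal (|∑ i, f i y| ^ p)) = ENNReal.ofReal ((n:ℝ) ^ p) := by
      have hcongr : ∀ y ∈ ball (0 : EuclideanSpace ℝ (Fin d)) r,
          ENNReal.ofReal (|∑ i, f i y| ^ p) = ENNReal.ofReal ((n:ℝ) ^ p) := by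
        intro y hy
        have hsum : (∑ i, f i y) = (n:ℝ) := by
          have hone : ∀ i : Fin n, f i y = 1 := by
            intro i
            have h1 : y ∉ ball (ctr i) r := hsep _ _ (hdist0 i) y hy
            rw [hf]
            simp only [hb_mem _ _ hy, hb_nmem _ _ h1]
            ring
          rw [Finset.sum_congr rfl (fun i _ => hone i)]
          simp
        rw [hsum, abs_of_nonneg (Nat.cast_nonneg n)]
      rw [setLIntegral_congr_fun measurableSet_ball hcongr,
        setLIntegral_const, hballr, mul_one]
    rw [hballr, hints, ENNReal.one_rpow, one_mul] at hlow
    have hpow : (ENNReal.ofReal ((n:ℝ) ^ p)) ^ ((1:ℝ)/p) = ENNReal.ofReal (n:ℝ) := by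
      rw [ENNReal.ofReal_rpow_of_pos (by positivity), ← Real.rpow_mul hnR.le,
        mul_one_div_cancel hp0.ne', Real.rpow_one]
    rw [hpow] at hlow
    refine lt_of_lt_of_le ?_ hlow
    rw [ENNReal.ofReal_lt_ofReal_iff hnR]
    nlinarith
end

section
/- Let X be a nontrivial real normed space and let n ≥ 2 be an integer. Then 1 ≤ C_NJ^{(n)}(X) ≤ n, where C_NJ^{(n)}(X) is the n-th von Neumann–Jordan constant of X. -/
open Finset

lemma sum_filter_cube {m : ℕ} (g : (Fin (m + 1) → Bool) → ℝ) :
    ∑ s ∈ Finset.univ.filter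
        (fun s : Fin (m + 1) → Bool => ∀ i : Fin (m + 1), (i : ℕ) = 0 → s i = true), g s
      = ∑ t : Fin m → Bool, g (Fin.cons true t) := by
  refine Finset.sum_nbij' (i := fun s => Fin.tail s) (j := fun t => Fin.cons true t) ?_ ?_ ?_ ?_ ?_
  · intro s _; simp
  · intro t _
    simp only [Finset.mem_filter, Finset.mem_univ, true_and]
    intro i hi
    have : i = 0 := Fin.ext hi
    subst this; simp
  · intro s hs
    simp only [Finset.mem_filter, Finset.mem_univ, true_and] at hs
    have h0 : s 0 = true := hs 0 rfl
    rw [← h0]; exact Fin.cons_self_tail s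
  · intro t _; simp [Fin.tail_cons]
  · intro s hs
    simp only [Finset.mem_filter, Finset.mem_univ, true_and] at hs
    have h0 : s 0 = true := hs 0 rfl
    rw [← h0, Fin.cons_self_tail s]

lemma sq_sign_sum (m : ℕ) (c : ℝ) :
    ∑ s : Fin m → Bool, (c + ∑ i, (if s i then (1 : ℝ) else -1)) ^ 2
      = 2 ^ m * (c ^ 2 + m) := by
  induction m generalizing c with
  | zero => simp
  | succ m ih =>
    rw [← (Fin.consEquiv (fun _ : Fin (m + 1) => Bool)).sum_comp]
    rw [Fintype.sum_prod_type]
    have key : ∀ (b : Bool) (t : Fin m → Bool),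
        (∑ i : Fin (m + 1), (if (Fin.consEquiv (fun _ => Bool) (b, t)) i then (1:ℝ) else -1))
          = (if b then (1:ℝ) else -1) + ∑ i : Fin m, (if t i then (1:ℝ) else -1) := by
      intro b t
      rw [Fin.sum_univ_succ]
      simp [Fin.consEquiv]
    simp only [key]
    have : ∀ b : Bool,
        ∑ t : Fin m → Bool,
          (c + ((if b then (1:ℝ) else -1) + ∑ i : Fin m, (if t i then (1:ℝ) else -1))) ^ 2
        = 2 ^ m * ((c + (if b then (1:ℝ) else -1)) ^ 2 + m) := by
      intro b
      simp_rw [← add_assoc]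
      exact ih (c + (if b then (1:ℝ) else -1))
    rw [Fintype.sum_bool, this true, this false]
    norm_num
    ring



/-- The `n`-th von Neumann–Jordan constant of a real normed space `X`:
`C_NJ^{(n)}(X) = sup{ (∑_{signs} ‖x₁ ± ⋯ ± x_n‖²) / (2^{n-1} ∑ ‖x_i‖²) : x_i ≠ 0 }`,
the sum being over the `2^{n-1}` choices of signs with the first sign `+`. -/
noncomputable def njConst (X : Type*) [NormedAddCommGroup X] [NormedSpace ℝ X]
    (n : ℕ) : ℝ :=
  sSup { c : ℝ | ∃ x : Fin n → X, (∀ i, x i ≠ 0) ∧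
    c = (∑ s ∈ Finset.univ.filter
            (fun s : Fin n → Bool => ∀ i : Fin n, (i : ℕ) = 0 → s i = true),
          ‖∑ i, (if s i then (1 : ℝ) else -1) • x i‖ ^ 2) /
        (2 ^ (n - 1) * ∑ i, ‖x i‖ ^ 2) }

/-- Theorem 6 of the paper: for any nontrivial real normed space `X` and `n ≥ 2`,
`1 ≤ C_NJ^{(n)}(X) ≤ n`. -/
theorem njConst_bounds (X : Type*) [NormedAddCommGroup X] [NormedSpace ℝ X]
    [Nontrivial X] (n : ℕ) (hn : 2 ≤ n) :
    1 ≤ njConst X n ∧ njConst X n ≤ n := by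
  obtain ⟨m, rfl⟩ : ∃ m, n = m + 1 := ⟨n - 1, by omega⟩
  set S := { c : ℝ | ∃ x : Fin (m + 1) → X, (∀ i, x i ≠ 0) ∧
    c = (∑ s ∈ Finset.univ.filter
            (fun s : Fin (m + 1) → Bool => ∀ i : Fin (m + 1), (i : ℕ) = 0 → s i = true),
          ‖∑ i, (if s i then (1 : ℝ) else -1) • x i‖ ^ 2) /
        (2 ^ (m + 1 - 1) * ∑ i, ‖x i‖ ^ 2) } with hS
  -- the upper bound for all elements
  have hub : ∀ c ∈ S, c ≤ (m + 1 : ℝ) := by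
    rintro c ⟨x, hx, rfl⟩
    have hxpos : (0:ℝ) < ∑ i, ‖x i‖ ^ 2 := by
      apply Finset.sum_pos'
      · intro i _; positivity
      · exact ⟨0, Finset.mem_univ _, pow_pos (norm_pos_iff.mpr (hx 0)) 2⟩
    have hD : (0:ℝ) < 2 ^ (m + 1 - 1) * ∑ i, ‖x i‖ ^ 2 := by positivity
    rw [div_le_iff₀ hD]
    have hterm : ∀ s : Fin (m + 1) → Bool,
        ‖∑ i, (if s i then (1 : ℝ) else -1) • x i‖ ^ 2 ≤ (m + 1 : ℝ) * ∑ i, ‖x i‖ ^ 2 := by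
      intro s
      have h1 : ‖∑ i, (if s i then (1 : ℝ) else -1) • x i‖ ≤ ∑ i, ‖x i‖ := by
        refine (norm_sum_le _ _).trans_eq ?_
        refine Finset.sum_congr rfl fun i _ => ?_
        rw [norm_smul]
        rcases Bool.eq_false_or_eq_true (s i) with h | h <;> simp [h]
      calc ‖∑ i, (if s i then (1 : ℝ) else -1) • x i‖ ^ 2
          ≤ (∑ i, ‖x i‖) ^ 2 := by
            apply pow_le_pow_left₀ (norm_nonneg _) h1
        _ ≤ (Finset.univ : Finset (Fin (m + 1))).card * ∑ i, ‖x i‖ ^ 2 :=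
            sq_sum_le_card_mul_sum_sq
        _ = (m + 1 : ℝ) * ∑ i, ‖x i‖ ^ 2 := by
            simp [Finset.card_univ]
    calc (∑ s ∈ Finset.univ.filter
            (fun s : Fin (m + 1) → Bool => ∀ i : Fin (m + 1), (i : ℕ) = 0 → s i = true),
          ‖∑ i, (if s i then (1 : ℝ) else -1) • x i‖ ^ 2)
        ≤ ∑ _s ∈ Finset.univ.filter
            (fun s : Fin (m + 1) → Bool => ∀ i : Fin (m + 1), (i : ℕ) = 0 → s i = true),
            ((m + 1 : ℝ) * ∑ i, ‖x i‖ ^ 2) :=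
          Finset.sum_le_sum fun s _ => hterm s
      _ = (2:ℝ) ^ m * ((m + 1 : ℝ) * ∑ i, ‖x i‖ ^ 2) := by
          rw [Finset.sum_const, nsmul_eq_mul]
          congr 1
          have := sum_filter_cube (m := m) (fun _ => (1:ℝ))
          simpa using this
      _ = (m + 1 : ℝ) * (2 ^ (m + 1 - 1) * ∑ i, ‖x i‖ ^ 2) := by
          simp only [Nat.add_sub_cancel]
          ring
  -- the element 1 ∈ S
  obtain ⟨x₀, hx₀⟩ := exists_ne (0 : X)
  have h1S : (1 : ℝ) ∈ S := by
    refine ⟨fun _ => x₀, fun _ => hx₀, ?_⟩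
    have hnum : ∀ s : Fin (m + 1) → Bool,
        ‖∑ i, (if s i then (1 : ℝ) else -1) • x₀‖ ^ 2
          = (∑ i, (if s i then (1 : ℝ) else -1)) ^ 2 * ‖x₀‖ ^ 2 := by
      intro s
      rw [← Finset.sum_smul, norm_smul, mul_pow, Real.norm_eq_abs, sq_abs]
    calc (1:ℝ)
        = (2 ^ m * (m + 1) * ‖x₀‖ ^ 2) / (2 ^ (m + 1 - 1) * ∑ _i : Fin (m + 1), ‖x₀‖ ^ 2) := by
          rw [Finset.sum_const, Finset.card_univ, nsmul_eq_mul]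
          simp only [Nat.add_sub_cancel, Fintype.card_fin]
          have hx0n : (0:ℝ) < ‖x₀‖ := norm_pos_iff.mpr hx₀
          rw [eq_comm, div_eq_one_iff_eq (by positivity)]
          push_cast
          ring
      _ = _ := by
          congr 1
          rw [sum_filter_cube (g := fun s => ‖∑ i, (if s i then (1 : ℝ) else -1) • (fun _ : Fin (m+1) => x₀) i‖ ^ 2)]
          simp only [hnum]
          rw [← Finset.sum_mul]
          congr 1
          have hcons : ∀ t : Fin m → Bool,
              (∑ i : Fin (m + 1), (if (Fin.cons true t : Fin (m+1) → Bool) i then (1:ℝ) else -1))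
                = 1 + ∑ i : Fin m, (if t i then (1:ℝ) else -1) := by
            intro t
            rw [Fin.sum_univ_succ]
            simp
          calc (2:ℝ) ^ m * (m + 1)
              = 2 ^ m * ((1:ℝ) ^ 2 + m) := by ring
            _ = ∑ t : Fin m → Bool, (1 + ∑ i : Fin m, (if t i then (1:ℝ) else -1)) ^ 2 :=
                (sq_sign_sum m 1).symm
            _ = _ := by
                refine Finset.sum_congr rfl fun t _ => ?_
                rw [hcons t]
  have hbdd : BddAbove S := ⟨(m + 1 : ℝ), fun c hc => hub c hc⟩
  constructor
  · exact le_csSup hbdd h1S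
  · have := csSup_le ⟨1, h1S⟩ hub
    have h2 : njConst X (m + 1) ≤ (m + 1 : ℝ) := this
    simpa using h2
end

section
/- Let H be an infinite-dimensional real Hilbert space and let n ≥ 2 be an integer. Then C_J^{(n)}(H) = √n, where C_J^{(n)}(H) is the n-th James constant of H. -/
open Finset in
private lemma james_sign_sum_le {H : Type*} [NormedAddCommGroup H] [InnerProductSpace ℝ H]
    {n : ℕ} (x : Fin n → H) (hx : ∀ i, ‖x i‖ = 1) (t : Finset (Fin n)) :
    ∃ s : Fin n → ℝ, (∀ i, s i = 1 ∨ s i = -1) ∧ ‖∑ i ∈ t, s i • x i‖ ^ 2 ≤ (t.card : ℝ) := by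
  classical
  induction t using Finset.induction_on with
  | empty => exact ⟨fun _ => 1, fun _ => Or.inl rfl, by simp⟩
  | insert a t ha ih =>
    obtain ⟨s, hs, hle⟩ := ih
    set v := ∑ i ∈ t, s i • x i with hv
    have hpar : ‖v + x a‖ ^ 2 + ‖v - x a‖ ^ 2 = 2 * (‖v‖ ^ 2 + ‖x a‖ ^ 2) := by
      simpa [sq] using parallelogram_law_with_norm ℝ v (x a)
    have hcard : ((insert a t).card : ℝ) = (t.card : ℝ) + 1 := by
      rw [Finset.card_insert_of_notMem ha]; push_cast; ring
    rcases le_total ‖v + x a‖ ‖v - x a‖ with h | h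
    · refine ⟨Function.update s a 1, ?_, ?_⟩
      · intro i
        rcases eq_or_ne i a with rfl | hi
        · simp
        · simpa [Function.update_of_ne hi] using hs i
      · have hrest : ∑ i ∈ t, Function.update s a 1 i • x i = v :=
          Finset.sum_congr rfl fun i hi => by
            rw [Function.update_of_ne (ne_of_mem_of_not_mem hi ha)]
        rw [Finset.sum_insert ha, hrest, Function.update_self, one_smul, hcard]
        have h2 : ‖v + x a‖ ^ 2 ≤ ‖v - x a‖ ^ 2 := by
          exact pow_le_pow_left₀ (norm_nonneg _) h 2
        have h3 : ‖x a + v‖ = ‖v + x a‖ := by rw [add_comm]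
        rw [h3]
        nlinarith [hx a]
    · refine ⟨Function.update s a (-1), ?_, ?_⟩
      · intro i
        rcases eq_or_ne i a with rfl | hi
        · simp
        · simpa [Function.update_of_ne hi] using hs i
      · have hrest : ∑ i ∈ t, Function.update s a (-1) i • x i = v :=
          Finset.sum_congr rfl fun i hi => by
            rw [Function.update_of_ne (ne_of_mem_of_not_mem hi ha)]
        rw [Finset.sum_insert ha, hrest, Function.update_self, hcard]
        have h2 : ‖v - x a‖ ^ 2 ≤ ‖v + x a‖ ^ 2 := by
          exact pow_le_pow_left₀ (norm_nonneg _) h 2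
        have h3 : ‖(-1 : ℝ) • x a + v‖ = ‖v - x a‖ := by
          rw [neg_one_smul]; rw [show -x a + v = v - x a by abel]
        rw [h3]
        nlinarith [hx a]

/-- The `n`-th James constant of a real normed space `X`:
`C_J^{(n)}(X) = sup{ min_{signs} ‖x₁ ± x₂ ± ⋯ ± x_n‖ : ‖x_i‖ = 1 }`,
where the minimum is over the `2^{n-1}` choices of signs with the first sign `+`. -/
noncomputable def jamesConst (X : Type*) [NormedAddCommGroup X] [NormedSpace ℝ X]
    (n : ℕ) : ℝ :=
  sSup { c : ℝ | ∃ x : Fin n → X, (∀ i, ‖x i‖ = 1) ∧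
    c = sInf { r : ℝ | ∃ s : Fin n → ℝ, (∀ i, s i = 1 ∨ s i = -1) ∧
      (∀ i : Fin n, (i : ℕ) = 0 → s i = 1) ∧ r = ‖∑ i, s i • x i‖ } }

/-- Theorem 7 (second part): for an infinite-dimensional real Hilbert space `H` and
`n ≥ 2`, `C_J^{(n)}(H) = √n`. -/
theorem jamesConst_hilbert (H : Type*) [NormedAddCommGroup H] [InnerProductSpace ℝ H]
    [CompleteSpace H] (hH : ¬ FiniteDimensional ℝ H) (n : ℕ) (hn : 2 ≤ n) :
    jamesConst H n = Real.sqrt n := by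
  classical
  -- notation for the inner set
  set T : (Fin n → H) → Set ℝ := fun x =>
    { r : ℝ | ∃ s : Fin n → ℝ, (∀ i, s i = 1 ∨ s i = -1) ∧
      (∀ i : Fin n, (i : ℕ) = 0 → s i = 1) ∧ r = ‖∑ i, s i • x i‖ } with hT
  -- T x is bounded below by 0 and, for unit vectors, sInf (T x) ≤ √n
  have hTbdd : ∀ x : Fin n → H, BddBelow (T x) := by
    intro x
    exact ⟨0, fun r hr => by obtain ⟨s, -, -, rfl⟩ := hr; exact norm_nonneg _⟩
  have hub : ∀ x : Fin n → H, (∀ i, ‖x i‖ = 1) → sInf (T x) ≤ Real.sqrt n := by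
    intro x hx
    obtain ⟨s, hs, hle⟩ := james_sign_sum_le x hx Finset.univ
    have hle' : ‖∑ i, s i • x i‖ ^ 2 ≤ (n : ℝ) := by simpa using hle
    set i0 : Fin n := ⟨0, by omega⟩ with hi0
    set s' : Fin n → ℝ := fun i => s i0 * s i with hs'
    have hmem : ‖∑ i, s' i • x i‖ ∈ T x := by
      refine ⟨s', fun i => ?_, fun i hi => ?_, rfl⟩
      · rcases hs i0 with h0 | h0 <;> rcases hs i with hi | hi <;>
          simp [hs', h0, hi]
      · have : i = i0 := Fin.ext hi
        subst this
        rcases hs i0 with h0 | h0 <;> simp [hs', h0]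
    have hnorm : ‖∑ i, s' i • x i‖ = ‖∑ i, s i • x i‖ := by
      have : ∑ i, s' i • x i = s i0 • ∑ i, s i • x i := by
        rw [Finset.smul_sum]
        exact Finset.sum_congr rfl fun i _ => (smul_smul _ _ _).symm
      rw [this, norm_smul, Real.norm_eq_abs]
      rcases hs i0 with h0 | h0 <;> simp [h0]
    have hval : ‖∑ i, s i • x i‖ ≤ Real.sqrt n := by
      calc ‖∑ i, s i • x i‖ = Real.sqrt (‖∑ i, s i • x i‖ ^ 2) :=
            (Real.sqrt_sq (norm_nonneg _)).symm
        _ ≤ Real.sqrt n := Real.sqrt_le_sqrt hle'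
    exact le_trans (csInf_le (hTbdd x) hmem) (hnorm ▸ hval)
  -- orthonormal family of size n
  obtain ⟨w, b, hb⟩ := exists_hilbertBasis ℝ H
  have hw : w.Infinite := by
    by_contra hfin
    rw [Set.not_infinite] at hfin
    apply hH
    haveI hfd : FiniteDimensional ℝ (Submodule.span ℝ w) :=
      FiniteDimensional.span_of_finite ℝ hfin
    have hclosed : IsClosed ((Submodule.span ℝ w : Submodule ℝ H) : Set H) :=
      Submodule.closed_of_finiteDimensional _
    have htop : (Submodule.span ℝ w).topologicalClosure = ⊤ := by
      simpa [hb, Subtype.range_coe] using b.dense_span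
    have hspan : (Submodule.span ℝ w : Submodule ℝ H) = ⊤ := by
      rw [← hclosed.submodule_topologicalClosure_eq, htop]
    rw [hspan] at hfd
    exact Module.Finite.equiv (Submodule.topEquiv)
  haveI : Infinite w := Set.infinite_coe_iff.2 hw
  let f : Fin n ↪ w := Fin.valEmbedding.trans (Infinite.natEmbedding w)
  set x₀ : Fin n → H := b ∘ f with hx₀
  have hon : Orthonormal ℝ x₀ := b.orthonormal.comp f f.injective
  have hxu : ∀ i, ‖x₀ i‖ = 1 := hon.1
  -- every element of T x₀ equals √n
  have heval : ∀ r ∈ T x₀, r = Real.sqrt n := by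
    rintro r ⟨s, hs, -, rfl⟩
    have hinner : (inner ℝ (∑ i, s i • x₀ i) (∑ i, s i • x₀ i) : ℝ) = n := by
      rw [hon.inner_sum s s Finset.univ]
      have : ∀ i ∈ Finset.univ, (starRingEnd ℝ) (s i) * s i = 1 := by
        intro i _
        rcases hs i with h | h <;> simp [h]
      rw [Finset.sum_congr rfl this]
      simp
    have hnsq : ‖∑ i, s i • x₀ i‖ ^ 2 = n := by
      rw [← real_inner_self_eq_norm_sq]; exact hinner
    rw [← hnsq, Real.sqrt_sq (norm_nonneg _)]
  have hsqrt_mem : Real.sqrt n ∈ T x₀ := by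
    refine ⟨fun _ => 1, fun _ => Or.inl rfl, fun _ _ => rfl, ?_⟩
    exact (heval _ ⟨fun _ => 1, fun _ => Or.inl rfl, fun _ _ => rfl, rfl⟩).symm
  have hinf₀ : sInf (T x₀) = Real.sqrt n :=
    le_antisymm (csInf_le (hTbdd x₀) hsqrt_mem)
      (le_csInf ⟨_, hsqrt_mem⟩ fun r hr => (heval r hr).ge)
  -- assemble
  unfold jamesConst
  apply le_antisymm
  · refine csSup_le ⟨Real.sqrt n, x₀, hxu, hinf₀.symm⟩ ?_
    rintro c ⟨x, hx, rfl⟩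
    exact hub x hx
  · refine le_csSup ⟨Real.sqrt n, ?_⟩ ⟨x₀, hxu, hinf₀.symm⟩
    rintro c ⟨x, hx, rfl⟩
    exact hub x hx
end
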